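/- Over the set S = {ỹ probability vector on K classes : ‖ỹ − e_k‖₁ ≤ ε}, which is compact and convex, the linear function ỹ ↦ ∑_j ỹ[j] c_j attains its maximum at an extreme point; in particular the maximum value is max over j of [(1 − ε/2)c_k + (ε/2)c_j] when ε ≤ 2, assuming c_j ≥ 0 for all j and c_k ≤ c_j for the maximizing computation. Formally: sup_{ỹ ∈ S} ∑_j ỹ[j] c_j = (1 − ε/2)c_k + (ε/2)·max_{j} c_j, provided max_j c_j ≥ c_k. -/

import Mathlib

/-!
On the simplex, the `ℓ¹`-distance to the vertex `e_k` is `2 (1 - y k)`, so the constraint only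
says that at least `1 - ε/2` of the mass sits on `k`. Moving the remaining mass to a maximiser of
`c` is optimal, and the vertex mix `(1 - ε/2) e_k + (ε/2) e_{j₀}` realises it.
-/

open Finset

namespace StdSimplex

variable {ι : Type*} [Fintype ι] [DecidableEq ι] {y : ι → ℝ}

theorem sum_abs_sub_indicator_eq (hy0 : ∀ j, 0 ≤ y j) (hy1 : ∑ j, y j = 1) (k : ι) :
    ∑ j, |y j - (if j = k then (1:ℝ) else 0)| = 2 * (1 - y k) := by
  have hyk : y k ≤ 1 := hy1 ▸ single_le_sum (fun j _ => hy0 j) (mem_univ k)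
  have hrest : ∑ j ∈ univ.erase k, y j = 1 - y k := by
    linarith [add_sum_erase univ y (mem_univ k)]
  have hoff : ∑ j ∈ univ.erase k, |y j - (if j = k then (1:ℝ) else 0)|
      = ∑ j ∈ univ.erase k, y j :=
    sum_congr rfl fun j hj => by simp [ne_of_mem_erase hj, abs_of_nonneg (hy0 j)]
  rw [← add_sum_erase univ _ (mem_univ k), hoff, hrest, if_pos rfl,
    abs_of_nonpos (by linarith)]
  ring

theorem sum_mul_le (hy0 : ∀ j, 0 ≤ y j) (hy1 : ∑ j, y j = 1) (k : ι) {c : ι → ℝ} {M : ℝ}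
    (hM : ∀ j, c j ≤ M) : ∑ j, y j * c j ≤ y k * c k + (1 - y k) * M := by
  have hrest : ∑ j ∈ univ.erase k, y j = 1 - y k := by
    linarith [add_sum_erase univ y (mem_univ k)]
  rw [← add_sum_erase univ _ (mem_univ k), ← hrest, sum_mul]
  gcongr with j
  · exact hy0 j
  · exact hM j

theorem exists_mix_of_vertices (k j : ι) {t : ℝ} (ht0 : 0 ≤ t) (ht1 : t ≤ 1) (c : ι → ℝ) :
    ∃ y : ι → ℝ, (∀ i, 0 ≤ y i) ∧ ∑ i, y i = 1 ∧ 1 - t ≤ y k ∧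
      ∑ i, y i * c i = (1 - t) * c k + t * c j := by
  have h1t : 0 ≤ 1 - t := by linarith
  refine ⟨fun i => (1 - t) * (if i = k then 1 else 0) + t * (if i = j then 1 else 0),
    fun i => by positivity, ?_, ?_, ?_⟩
  · simp [sum_add_distrib]
  · by_cases hjk : k = j <;> simp [hjk, ht0]
  · simp [add_mul, sum_add_distrib, ite_mul]

end StdSimplex

theorem stmt_11_general (K : ℕ) (c : Fin K → ℝ)
    (k : Fin K) (ε : ℝ) (hε : ε ∈ Set.Icc (0:ℝ) 2) :
    IsGreatest
      {z | ∃ y : Fin K → ℝ, (∀ j, 0 ≤ y j) ∧ (∑ j, y j = 1) ∧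
        (∑ j, |y j - (if j = k then (1:ℝ) else 0)| ≤ ε) ∧ z = ∑ j, y j * c j}
      ((1 - ε/2) * c k + (ε/2) * Finset.univ.sup' ⟨k, Finset.mem_univ k⟩ c) := by
  obtain ⟨hε0, hε2⟩ := hε
  set M := univ.sup' ⟨k, mem_univ k⟩ c
  have hM : ∀ j, c j ≤ M := fun j => le_sup' c (mem_univ j)
  obtain ⟨j₀, -, hj₀⟩ := exists_mem_eq_sup' ⟨k, mem_univ k⟩ c
  constructor
  · obtain ⟨y, hy0, hy1, hyk, hyc⟩ :=
      StdSimplex.exists_mix_of_vertices k j₀ (by linarith : 0 ≤ ε / 2) (by linarith) c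
    refine ⟨y, hy0, hy1, ?_, by rw [hyc, ← hj₀]⟩
    rw [StdSimplex.sum_abs_sub_indicator_eq hy0 hy1]
    linarith
  · rintro z ⟨y, hy0, hy1, hyε, rfl⟩
    rw [StdSimplex.sum_abs_sub_indicator_eq hy0 hy1] at hyε
    have hmass : 1 - y k ≤ ε / 2 := by linarith
    calc ∑ j, y j * c j ≤ y k * c k + (1 - y k) * M := StdSimplex.sum_mul_le hy0 hy1 k hM
      _ = c k + (1 - y k) * (M - c k) := by ring
      _ ≤ c k + ε / 2 * (M - c k) := by gcongr; linarith [hM k]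
      _ = (1 - ε / 2) * c k + ε / 2 * M := by ring

/-- The linear function attains its maximum over the truncated simplex at the stated value. -/
theorem stmt_11 (K : ℕ) (hK : 2 ≤ K) (c : Fin K → ℝ) (hc : ∀ j, 0 ≤ c j)
    (k : Fin K) (ε : ℝ) (hε : ε ∈ Set.Icc (0:ℝ) 2)
    (hck : c k ≤ Finset.univ.sup' ⟨k, Finset.mem_univ k⟩ c) :
    IsGreatest
      {z | ∃ y : Fin K → ℝ, (∀ j, 0 ≤ y j) ∧ (∑ j, y j = 1) ∧
        (∑ j, |y j - (if j = k then (1:ℝ) else 0)| ≤ ε) ∧ z = ∑ j, y j * c j}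
      ((1 - ε/2) * c k + (ε/2) * Finset.univ.sup' ⟨k, Finset.mem_univ k⟩ c) :=
  stmt_11_general K c k ε hε
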